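/- arXiv:2506.07103 — 6 statements merged into one kernel-verified Lean document; each statement's English description precedes it below -/
import Mathlib

section
/- max(EX₁ f, EX₂ f, EX₃ f) ≤ Inf_S f, and Inf_S f ≤ (EX₁ f + EX₂ f + EX₃ f)/2. (Lemma 1, three test gates: the three influence samplers give a lower bound IL_S^(II) = max{EX₁, EX₂, EX₃} and an upper bound IU_S^(II) = (EX₁ + EX₂ + EX₃)/2 on the influence.) -/
open Finset

/-- The influence of a (diagonal of a) process matrix `f` on a qubit set `S`:
the total weight of Pauli strings acting non-trivially on some qubit in `S`. -/
def Infl (n : ℕ) (S : Finset (Fin n)) (f : (Fin n → Fin 4) → ℝ) : ℝ :=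
  ∑ x ∈ Finset.univ.filter (fun x : Fin n → Fin 4 => ∃ i ∈ S, x i ≠ 0), f x

/-- The influence sampler associated with the Pauli index set `A ⊆ Fin 4`:
`1` minus the weight of Pauli strings whose components on `S` lie in `A`. -/
def EX (n : ℕ) (S : Finset (Fin n)) (A : Finset (Fin 4)) (f : (Fin n → Fin 4) → ℝ) : ℝ :=
  1 - ∑ x ∈ Finset.univ.filter (fun x : Fin n → Fin 4 => ∀ i ∈ S, x i ∈ A), f x

lemma EX_eq (n : ℕ) (S : Finset (Fin n)) (A : Finset (Fin 4))
    (f : (Fin n → Fin 4) → ℝ) (hsum : ∑ x, f x = 1) :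
    EX n S A f = ∑ x ∈ Finset.univ.filter (fun x : Fin n → Fin 4 => ¬ ∀ i ∈ S, x i ∈ A), f x := by
  unfold EX
  rw [← hsum, ← Finset.sum_filter_add_sum_filter_not Finset.univ
    (fun x : Fin n → Fin 4 => ∀ i ∈ S, x i ∈ A) f]
  ring

lemma EX_le_Infl (n : ℕ) (S : Finset (Fin n)) (A : Finset (Fin 4)) (h0 : (0 : Fin 4) ∈ A)
    (f : (Fin n → Fin 4) → ℝ) (hf : ∀ x, 0 ≤ f x) (hsum : ∑ x, f x = 1) :
    EX n S A f ≤ Infl n S f := by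
  rw [EX_eq n S A f hsum]
  apply Finset.sum_le_sum_of_subset_of_nonneg
  · intro x hx
    simp only [Finset.mem_filter, Finset.mem_univ, true_and, not_forall] at hx ⊢
    obtain ⟨i, hi, hia⟩ := hx
    exact ⟨i, hi, fun h => hia (h ▸ h0)⟩
  · intro x _ _; exact hf x

theorem three_gate_influence_bounds (n : ℕ) (S : Finset (Fin n))
    (f : (Fin n → Fin 4) → ℝ) (hf : ∀ x, 0 ≤ f x) (hsum : ∑ x, f x = 1) :
    max (EX n S {0, 3} f) (max (EX n S {0, 1} f) (EX n S {0, 2} f)) ≤ Infl n S f ∧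
    Infl n S f ≤ (EX n S {0, 3} f + EX n S {0, 1} f + EX n S {0, 2} f) / 2 := by
  constructor
  · apply max_le
    · exact EX_le_Infl n S _ (by decide) f hf hsum
    apply max_le
    · exact EX_le_Infl n S _ (by decide) f hf hsum
    · exact EX_le_Infl n S _ (by decide) f hf hsum
  · rw [le_div_iff₀ (by norm_num : (0:ℝ) < 2),
      EX_eq n S _ f hsum, EX_eq n S _ f hsum, EX_eq n S _ f hsum]
    unfold Infl
    rw [Finset.sum_filter, Finset.sum_filter, Finset.sum_filter, Finset.sum_filter,
      ← Finset.sum_add_distrib, ← Finset.sum_add_distrib, Finset.sum_mul]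
    apply Finset.sum_le_sum
    intro x _
    by_cases hx : ∃ i ∈ S, x i ≠ 0
    · obtain ⟨i, hi, hxi⟩ := hx
      have hv : x i = 1 ∨ x i = 2 ∨ x i = 3 := by
        revert hxi; exact (by decide : ∀ v : Fin 4, v ≠ 0 → v = 1 ∨ v = 2 ∨ v = 3) (x i)
      have hpos := hf x
      have key : ∀ (A : Finset (Fin 4)), x i ∉ A →
          (if ¬ ∀ j ∈ S, x j ∈ A then f x else 0) = f x := by
        intro A hA
        rw [if_pos]; exact fun h => hA (h i hi)
      rw [if_pos ⟨i, hi, hxi⟩]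
      rcases hv with h1 | h2 | h3
      · rw [key {0,3} (by rw [h1]; decide), key {0,2} (by rw [h1]; decide)]
        have : (if ¬ ∀ j ∈ S, x j ∈ ({0,1} : Finset (Fin 4)) then f x else 0) ≥ 0 := by
          split <;> simp [hpos]
        linarith
      · rw [key {0,3} (by rw [h2]; decide), key {0,1} (by rw [h2]; decide)]
        have : (if ¬ ∀ j ∈ S, x j ∈ ({0,2} : Finset (Fin 4)) then f x else 0) ≥ 0 := by
          split <;> simp [hpos]
        linarith
      · rw [key {0,1} (by rw [h3]; decide), key {0,2} (by rw [h3]; decide)]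
        have : (if ¬ ∀ j ∈ S, x j ∈ ({0,3} : Finset (Fin 4)) then f x else 0) ≥ 0 := by
          split <;> simp [hpos]
        linarith
    · rw [if_neg hx]
      have hpos := hf x
      have : ∀ (A : Finset (Fin 4)), (0:ℝ) ≤ if ¬ ∀ j ∈ S, x j ∈ A then f x else 0 := by
        intro A; split <;> simp [hpos]
      have h1 := this {0,3}; have h2 := this {0,1}; have h3 := this {0,2}
      linarith
end

section
/- If S is a singleton, S = {i} for some i : Fin n, then the three-gate influence upper bound is exact: Inf_S f = (EX₁ f + EX₂ f + EX₃ f)/2. (For single-qubit influence, Inf_{{i}}[Φ] equals the tighter upper bound IU^(II)_{{i}}.) -/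
open Finset

theorem single_qubit_influence_exact (n : ℕ) (S : Finset (Fin n)) (i : Fin n)
    (hS : S = {i})
    (f : (Fin n → Fin 4) → ℝ) (hf : ∀ x, 0 ≤ f x) (hsum : ∑ x, f x = 1) :
    Infl n S f = (EX n S {0, 3} f + EX n S {0, 1} f + EX n S {0, 2} f) / 2 := by
  subst hS
  set w : Fin 4 → ℝ := fun k => ∑ x ∈ Finset.univ.filter (fun x : Fin n → Fin 4 => x i = k), f x
    with hw
  have key : ∀ t : Finset (Fin 4),
      ∑ x ∈ Finset.univ.filter (fun x : Fin n → Fin 4 => x i ∈ t), f x = ∑ k ∈ t, w k := by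
    intro t
    rw [hw]
    exact (Finset.sum_fiberwise_eq_sum_filter Finset.univ t (fun x => x i) f).symm
  have h1 : ∑ x ∈ Finset.univ.filter (fun x : Fin n → Fin 4 => x i ∈ (Finset.univ : Finset (Fin 4))), f x = 1 := by
    simpa using hsum
  rw [key] at h1
  have hsum4 : w 0 + w 1 + w 2 + w 3 = 1 := by
    rw [← h1, Fin.sum_univ_four]
  have hI : Infl n {i} f = w 1 + w 2 + w 3 := by
    have : Finset.univ.filter (fun x : Fin n → Fin 4 => ∃ j ∈ ({i} : Finset (Fin n)), x j ≠ 0)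
        = Finset.univ.filter (fun x : Fin n → Fin 4 => x i ∈ ({1, 2, 3} : Finset (Fin 4))) := by
      apply Finset.filter_congr
      intro x _
      simp only [Finset.mem_singleton, exists_eq_left, Finset.mem_insert]
      have : x i = 0 ∨ x i = 1 ∨ x i = 2 ∨ x i = 3 := by omega
      rcases this with h | h | h | h <;> rw [h] <;> decide
    rw [Infl, this, key]
    rw [show ({1, 2, 3} : Finset (Fin 4)) = insert 1 {2, 3} from rfl,
      Finset.sum_insert (by decide), Finset.sum_pair (by decide)]
    ring
  have hEX : ∀ A : Finset (Fin 4), EX n {i} A f =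
      1 - ∑ k ∈ A, w k := by
    intro A
    rw [EX]
    congr 1
    rw [← key]
    apply Finset.sum_congr
    · apply Finset.filter_congr; intro x _; simp
    · intros; rfl
  rw [hI, hEX, hEX, hEX]
  have e1 : ∑ k ∈ ({0, 3} : Finset (Fin 4)), w k = w 0 + w 3 :=
    Finset.sum_pair (by decide)
  have e2 : ∑ k ∈ ({0, 1} : Finset (Fin 4)), w k = w 0 + w 1 :=
    Finset.sum_pair (by decide)
  have e3 : ∑ k ∈ ({0, 2} : Finset (Fin 4)), w k = w 0 + w 2 :=
    Finset.sum_pair (by decide)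
  rw [e1, e2, e3]
  linarith
end

section
/- The two-gate influence upper bound is within a factor of two of the true influence: Inf_S f ≤ EX₁ f + EX₂ f ≤ 2 · Inf_S f. (In the paper's notation: Inf_S[Φ] ≤ IU_S ≤ 2·Inf_S[Φ].) -/
open Finset

theorem two_gate_upper_bound_factor_two (n : ℕ) (S : Finset (Fin n))
    (f : (Fin n → Fin 4) → ℝ) (hf : ∀ x, 0 ≤ f x) (hsum : ∑ x, f x = 1) :
    Infl n S f ≤ EX n S {0, 3} f + EX n S {0, 1} f ∧
    EX n S {0, 3} f + EX n S {0, 1} f ≤ 2 * Infl n S f := by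
  rw [EX_eq n S _ f hsum, EX_eq n S _ f hsum]
  set C1 := Finset.univ.filter (fun x : Fin n → Fin 4 => ¬ ∀ i ∈ S, x i ∈ ({0, 3} : Finset (Fin 4))) with hC1
  set C2 := Finset.univ.filter (fun x : Fin n → Fin 4 => ¬ ∀ i ∈ S, x i ∈ ({0, 1} : Finset (Fin 4))) with hC2
  set T := Finset.univ.filter (fun x : Fin n → Fin 4 => ∃ i ∈ S, x i ≠ 0) with hT
  have hsub1 : C1 ⊆ T := by
    intro x hx
    simp only [hC1, hT, Finset.mem_filter, Finset.mem_univ, true_and] at hx ⊢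
    push_neg at hx
    obtain ⟨i, hi, h⟩ := hx
    exact ⟨i, hi, fun h0 => h (by simp [h0])⟩
  have hsub2 : C2 ⊆ T := by
    intro x hx
    simp only [hC2, hT, Finset.mem_filter, Finset.mem_univ, true_and] at hx ⊢
    push_neg at hx
    obtain ⟨i, hi, h⟩ := hx
    exact ⟨i, hi, fun h0 => h (by simp [h0])⟩
  have hTsub : T ⊆ C1 ∪ C2 := by
    intro x hx
    simp only [hT, hC1, hC2, Finset.mem_filter, Finset.mem_univ, true_and,
      Finset.mem_union] at hx ⊢
    obtain ⟨i, hi, h⟩ := hx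
    by_contra hcon
    push_neg at hcon
    have h1 := hcon.1 i hi
    have h2 := hcon.2 i hi
    simp only [Finset.mem_insert, Finset.mem_singleton] at h1 h2
    rcases h1 with h1 | h1 <;> rcases h2 with h2 | h2 <;> simp_all
  constructor
  · calc Infl n S f ≤ ∑ x ∈ C1 ∪ C2, f x := by
          exact Finset.sum_le_sum_of_subset_of_nonneg hTsub (fun x _ _ => hf x)
      _ = ∑ x ∈ C1, f x + ∑ x ∈ C2 \ C1, f x := by
          rw [← Finset.sum_union (Finset.disjoint_sdiff), Finset.union_sdiff_self_eq_union]
      _ ≤ ∑ x ∈ C1, f x + ∑ x ∈ C2, f x := by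
          have := Finset.sum_le_sum_of_subset_of_nonneg (Finset.sdiff_subset (s := C2) (t := C1))
            (fun x _ _ => hf x)
          linarith
  · have h1 := Finset.sum_le_sum_of_subset_of_nonneg hsub1 (fun x _ _ => hf x)
    have h2 := Finset.sum_le_sum_of_subset_of_nonneg hsub2 (fun x _ _ => hf x)
    unfold Infl
    rw [← hT]
    linarith
end

section
/- The three-gate influence upper bound is within a factor of 3/2 of the true influence: Inf_S f ≤ (EX₁ f + EX₂ f + EX₃ f)/2 ≤ (3/2) · Inf_S f. (In the paper's notation: Inf_S[Φ] ≤ IU_S^(II) ≤ (3/2)·Inf_S[Φ].) -/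
open Finset

theorem three_gate_upper_bound_factor_three_halves (n : ℕ) (S : Finset (Fin n))
    (f : (Fin n → Fin 4) → ℝ) (hf : ∀ x, 0 ≤ f x) (hsum : ∑ x, f x = 1) :
    Infl n S f ≤ (EX n S {0, 3} f + EX n S {0, 1} f + EX n S {0, 2} f) / 2 ∧
    (EX n S {0, 3} f + EX n S {0, 1} f + EX n S {0, 2} f) / 2 ≤ (3 / 2) * Infl n S f := by
  have hEX : ∀ A : Finset (Fin 4), EX n S A f
      = ∑ x, (if ¬ ∀ i ∈ S, x i ∈ A then f x else 0) := by
    intro A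
    unfold EX
    rw [← hsum, ← Finset.sum_filter_add_sum_filter_not Finset.univ
      (fun x => ∀ i ∈ S, x i ∈ A) f]
    simp only [Finset.sum_filter]
    ring
  have hInfl : Infl n S f = ∑ x, (if ∃ i ∈ S, x i ≠ 0 then f x else 0) := by
    unfold Infl; rw [Finset.sum_filter]
  have key : ∀ x : Fin n → Fin 4,
      2 * (if ∃ i ∈ S, x i ≠ 0 then f x else 0)
        ≤ (if ¬ ∀ i ∈ S, x i ∈ ({0, 3} : Finset (Fin 4)) then f x else 0)
        + (if ¬ ∀ i ∈ S, x i ∈ ({0, 1} : Finset (Fin 4)) then f x else 0)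
        + (if ¬ ∀ i ∈ S, x i ∈ ({0, 2} : Finset (Fin 4)) then f x else 0)
      ∧ (if ¬ ∀ i ∈ S, x i ∈ ({0, 3} : Finset (Fin 4)) then f x else 0)
        + (if ¬ ∀ i ∈ S, x i ∈ ({0, 1} : Finset (Fin 4)) then f x else 0)
        + (if ¬ ∀ i ∈ S, x i ∈ ({0, 2} : Finset (Fin 4)) then f x else 0)
        ≤ 3 * (if ∃ i ∈ S, x i ≠ 0 then f x else 0) := by
    intro x
    by_cases h : ∃ i ∈ S, x i ≠ 0
    · obtain ⟨i, hiS, hi⟩ := h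
      have hfx := hf x
      have hE : (if ∃ i ∈ S, x i ≠ 0 then f x else 0) = f x := if_pos ⟨i, hiS, hi⟩
      have hv : x i = 1 ∨ x i = 2 ∨ x i = 3 := by omega
      have fail : ∀ a : Fin 4, x i ∉ ({0, a} : Finset (Fin 4)) →
          (if ¬ ∀ j ∈ S, x j ∈ ({0, a} : Finset (Fin 4)) then f x else 0) = f x :=
        fun a ha => if_pos (fun hA => ha (hA i hiS))
      rw [hE]
      rcases hv with hv | hv | hv
      · rw [fail 3 (by rw [hv]; decide), fail 2 (by rw [hv]; decide)]
        constructor <;> [skip; skip] <;> split_ifs <;> linarith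
      · rw [fail 3 (by rw [hv]; decide), fail 1 (by rw [hv]; decide)]
        constructor <;> [skip; skip] <;> split_ifs <;> linarith
      · rw [fail 1 (by rw [hv]; decide), fail 2 (by rw [hv]; decide)]
        constructor <;> [skip; skip] <;> split_ifs <;> linarith
    · have hE : (if ∃ i ∈ S, x i ≠ 0 then f x else 0) = 0 := if_neg h
      have hall : ∀ A : Finset (Fin 4), (0 : Fin 4) ∈ A →
          (if ¬ ∀ j ∈ S, x j ∈ A then f x else 0) = 0 := by
        intro A h0
        refine if_neg (not_not_intro fun j hj => ?_)
        have : x j = 0 := by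
          by_contra hc
          exact h ⟨j, hj, hc⟩
        rw [this]; exact h0
      rw [hE, hall _ (by decide), hall _ (by decide), hall _ (by decide)]
      norm_num
  constructor
  · rw [le_div_iff₀ (by norm_num : (0:ℝ) < 2), hEX, hEX, hEX, hInfl,
      ← Finset.sum_add_distrib, ← Finset.sum_add_distrib, Finset.sum_mul]
    exact Finset.sum_le_sum fun x _ => by have := (key x).1; linarith
  · rw [div_le_iff₀ (by norm_num : (0:ℝ) < 2), hEX, hEX, hEX, hInfl,
      ← Finset.sum_add_distrib, ← Finset.sum_add_distrib, Finset.mul_sum,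
      Finset.sum_mul]
    exact Finset.sum_le_sum fun x _ => by have := (key x).2; linarith
end

section
/- Marginal cross-term bound (second estimate in the proof of the junta learning lemma): let α, β be finite types, let χ : Matrix (α × β) (α × β) ℂ be positive semidefinite, and let Z : Finset β. Then ∑_{a, b : α} ‖∑_{z ∈ Z} χ (a,z) (b,z)‖² ≤ (∑_{a : α} ∑_{z ∈ Z} re(χ (a,z) (a,z)))². -/
/-!
The matrix `M a b = ∑ z ∈ Z, χ (a, z) (b, z)` is a sum of principal submatrices of `χ`, hence
positive semidefinite. For a positive semidefinite matrix the `2 × 2` principal minors are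
nonnegative, i.e. `‖M a b‖² ≤ re (M a a) * re (M b b)`; summing over `a` and `b` bounds the left
side by `(re (trace M))²`.
-/

open Finset ComplexOrder

namespace Matrix

section RCLike

variable {n 𝕜 : Type*} [RCLike 𝕜] {A : Matrix n n 𝕜}

theorem PosSemidef.norm_apply_sq_le (hA : A.PosSemidef) (i j : n) :
    ‖A i j‖ ^ 2 ≤ RCLike.re (A i i) * RCLike.re (A j j) := by
  have hdet := (hA.submatrix ![i, j]).det_nonneg
  rw [det_fin_two] at hdet
  simp only [submatrix_apply, cons_val_zero, cons_val_one] at hdet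
  rw [← hA.isHermitian.coe_re_apply_self i, ← hA.isHermitian.coe_re_apply_self j,
    ← hA.isHermitian.apply j i, RCLike.star_def, RCLike.mul_conj, ← RCLike.ofReal_pow,
    ← RCLike.ofReal_mul, ← RCLike.ofReal_sub, RCLike.ofReal_nonneg] at hdet
  linarith

theorem PosSemidef.sum_norm_apply_sq_le [Fintype n] (hA : A.PosSemidef) :
    ∑ i, ∑ j, ‖A i j‖ ^ 2 ≤ RCLike.re A.trace ^ 2 :=
  calc ∑ i, ∑ j, ‖A i j‖ ^ 2 ≤ ∑ i, ∑ j, RCLike.re (A i i) * RCLike.re (A j j) :=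
        sum_le_sum fun i _ => sum_le_sum fun j _ => hA.norm_apply_sq_le i j
    _ = RCLike.re A.trace ^ 2 := by
        rw [sq, trace, map_sum, sum_mul_sum]
        rfl

end RCLike

section PartialTrace

variable {α β R : Type*}

def partialTraceOn [AddCommMonoid R] (χ : Matrix (α × β) (α × β) R) (Z : Finset β) :
    Matrix α α R :=
  fun a b => ∑ z ∈ Z, χ (a, z) (b, z)

theorem partialTraceOn_eq_sum_submatrix [AddCommMonoid R] (χ : Matrix (α × β) (α × β) R)
    (Z : Finset β) : χ.partialTraceOn Z = ∑ z ∈ Z, χ.submatrix (·, z) (·, z) := by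
  ext a b
  simp [partialTraceOn, sum_apply]

theorem PosSemidef.partialTraceOn [Ring R] [PartialOrder R] [StarRing R] [AddLeftMono R]
    {χ : Matrix (α × β) (α × β) R} (hχ : χ.PosSemidef) (Z : Finset β) :
    (χ.partialTraceOn Z).PosSemidef := by
  rw [partialTraceOn_eq_sum_submatrix]
  exact posSemidef_sum Z fun z _ => hχ.submatrix _

theorem re_trace_partialTraceOn [Fintype α] [RCLike R] (χ : Matrix (α × β) (α × β) R)
    (Z : Finset β) :
    RCLike.re (χ.partialTraceOn Z).trace = ∑ a, ∑ z ∈ Z, RCLike.re (χ (a, z) (a, z)) := by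
  simp [trace, partialTraceOn, map_sum]

end PartialTrace

end Matrix

theorem marginal_cross_term_bound_general {α β : Type*} [Fintype α]
    (χ : Matrix (α × β) (α × β) ℂ) (hpsd : χ.PosSemidef) (Z : Finset β) :
    ∑ a : α, ∑ b : α, ‖∑ z ∈ Z, χ (a, z) (b, z)‖ ^ 2
      ≤ (∑ a : α, ∑ z ∈ Z, (χ (a, z) (a, z)).re) ^ 2 := by
  have h := (hpsd.partialTraceOn Z).sum_norm_apply_sq_le
  rw [Matrix.re_trace_partialTraceOn] at h
  exact h

theorem marginal_cross_term_bound {α β : Type*} [Fintype α] [Fintype β]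
    (χ : Matrix (α × β) (α × β) ℂ) (hpsd : χ.PosSemidef) (Z : Finset β) :
    ∑ a : α, ∑ b : α, ‖∑ z ∈ Z, χ (a, z) (b, z)‖ ^ 2
      ≤ (∑ a : α, ∑ z ∈ Z, (χ (a, z) (a, z)).re) ^ 2 :=
  marginal_cross_term_bound_general χ hpsd Z
end

section
/- Single-qubit influence sampler identity for the test gate U₂ = H (Hadamard): let H = (1/√2) • !![1, 1; 1, −1]. With σ₀, σ₁, σ₂, σ₃, e₀, e₁, χ and Φ as in the context, (1/2) · ∑_{a ∈ {0,1}} (star (H.mulVec eₐ)) ⬝ᵥ (Φ((H.mulVec eₐ) ⬝ (star (H.mulVec eₐ))ᵀ)).mulVec (H.mulVec eₐ) = χ 0 0 + χ 1 1. Hence the influence sampler EX₂ = 1 − (χ 0 0 + χ 1 1). -/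
/-!
For a pure state `ψ`, `⟨ψ| σₓ |ψ⟩⟨ψ| σ_y |ψ⟩` factors as `⟨σₓ⟩_ψ ⟨σ_y⟩_ψ`, so the averaged fidelity
equals `∑ x y, χ x y · ½ ∑ₐ ⟨σₓ⟩ₐ ⟨σ_y⟩ₐ`. The Hadamard basis states `H e₀ = |+⟩`, `H e₁ = |−⟩` have
Pauli expectations `(1, ±1, 0, 0)`, so the average of the products is `1` at `(0,0)` and `(1,1)`
and vanishes elsewhere.
-/

open Matrix

/-- The Pauli matrices `σ₀ = I, σ₁ = X, σ₂ = Y, σ₃ = Z`. -/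
noncomputable def pauli : Fin 4 → Matrix (Fin 2) (Fin 2) ℂ :=
  ![1, !![0, 1; 1, 0], !![0, -Complex.I; Complex.I, 0], !![1, 0; 0, -1]]

/-- The single-qubit quantum process with process matrix `χ`:
`Φ(ρ) = ∑ x y, χ x y • σₓ * ρ * σ_y`. -/
noncomputable def procOf (χ : Fin 4 → Fin 4 → ℂ) :
    Matrix (Fin 2) (Fin 2) ℂ → Matrix (Fin 2) (Fin 2) ℂ :=
  fun ρ => ∑ x : Fin 4, ∑ y : Fin 4, χ x y • (pauli x * ρ * pauli y)

/-- The standard basis vectors `e₀ = (1,0)` and `e₁ = (0,1)`. -/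
def stdVec : Fin 2 → (Fin 2 → ℂ) := ![![1, 0], ![0, 1]]

/-- The Hadamard gate. -/
noncomputable def Hgate : Matrix (Fin 2) (Fin 2) ℂ :=
  (1 / Real.sqrt 2 : ℂ) • !![1, 1; 1, -1]

theorem Matrix.dotProduct_mul_vecMulVec_mul_mulVec {n R : Type*} [Fintype n] [CommSemiring R]
    (A B : Matrix n n R) (v w : n → R) :
    w ⬝ᵥ (A * vecMulVec v w * B) *ᵥ v = (w ⬝ᵥ A *ᵥ v) * (w ⬝ᵥ B *ᵥ v) := by
  rw [mul_vecMulVec, vecMulVec_mul, vecMulVec_mulVec, ← dotProduct_mulVec, op_smul_eq_smul,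
    dotProduct_smul, smul_eq_mul, mul_comm]

theorem star_dotProduct_procOf_vecMulVec_mulVec (χ : Fin 4 → Fin 4 → ℂ) (v : Fin 2 → ℂ) :
    star v ⬝ᵥ procOf χ (vecMulVec v (star v)) *ᵥ v =
      ∑ x, ∑ y, χ x y * ((star v ⬝ᵥ pauli x *ᵥ v) * (star v ⬝ᵥ pauli y *ᵥ v)) := by
  simp only [procOf, sum_mulVec, dotProduct_sum, smul_mulVec, dotProduct_smul, smul_eq_mul,
    dotProduct_mul_vecMulVec_mul_mulVec]

def hadamardBloch : Fin 2 → Fin 4 → ℂ := ![![1, 1, 0, 0], ![1, -1, 0, 0]]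

theorem Hgate_mulVec_stdVec (a : Fin 2) :
    Hgate *ᵥ stdVec a = (Real.sqrt 2 : ℂ)⁻¹ • ![1, (-1) ^ (a : ℕ)] := by
  fin_cases a <;> ext i <;> fin_cases i <;>
    simp [Hgate, stdVec, mulVec, dotProduct, Fin.sum_univ_two]

theorem star_Hgate_mulVec_stdVec (a : Fin 2) :
    star (Hgate *ᵥ stdVec a) = Hgate *ᵥ stdVec a := by
  rw [Hgate_mulVec_stdVec]; fin_cases a <;> ext i <;> fin_cases i <;> simp [Complex.conj_ofReal]

theorem dotProduct_pauli_mulVec_Hgate_mulVec_stdVec (a : Fin 2) (x : Fin 4) :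
    star (Hgate *ᵥ stdVec a) ⬝ᵥ pauli x *ᵥ (Hgate *ᵥ stdVec a) = hadamardBloch a x := by
  have hs : (Real.sqrt 2 : ℂ) ^ 2 = 2 := by
    rw [← Complex.ofReal_pow, Real.sq_sqrt zero_le_two]; norm_num
  rw [star_Hgate_mulVec_stdVec, Hgate_mulVec_stdVec]
  fin_cases a <;> fin_cases x <;>
    norm_num [pauli, hadamardBloch, mulVec, dotProduct, Fin.sum_univ_two, ← sq, hs]

theorem influence_sampler_identity_H (χ : Fin 4 → Fin 4 → ℂ) :
    (1 / 2 : ℂ) * ∑ a : Fin 2,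
        star (Hgate.mulVec (stdVec a)) ⬝ᵥ
          ((procOf χ (vecMulVec (Hgate.mulVec (stdVec a)) (star (Hgate.mulVec (stdVec a))))).mulVec
            (Hgate.mulVec (stdVec a)))
      = χ 0 0 + χ 1 1 := by
  simp only [star_dotProduct_procOf_vecMulVec_mulVec, dotProduct_pauli_mulVec_Hgate_mulVec_stdVec]
  simp only [Fin.sum_univ_two, Fin.sum_univ_four, hadamardBloch, cons_val, cons_val_zero,
    cons_val_one]
  ring
end
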